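/- arXiv:1710.09955 — 2 statements merged into one kernel-verified Lean document; each statement's English description precedes it below -/
import Mathlib

section
/- In the 4-uniform complete hypergraph on an infinite vertex set, every copy of the hypergraph G' is contained in exactly one board K^{X,Y}: there is a unique pair {X,Y} of vertices contained in all hyperedges of the copy. -/
/-- The graph `G = K₆ \ K₄`: vertices `0, 1` are the base vertices `A₀, A₁`,
vertices `2,…,5` are `B₁,…,B₄`; every pair of vertices is adjacent except
pairs among `{2,3,4,5}`. The base of `G` is the edge `s(0,1)`. -/
def G : SimpleGraph (Fin 6) where
  Adj a b := a ≠ b ∧ (a.val < 2 ∨ b.val < 2)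
  symm := ⟨fun _ _ h => ⟨h.1.symm, h.2.symm⟩⟩
  loopless := ⟨fun _ h => h.1 rfl⟩

instance : DecidableRel G.Adj := fun a b =>
  inferInstanceAs (Decidable (a ≠ b ∧ (a.val < 2 ∨ b.val < 2)))

/-- The inclusion of the vertex set of `G` into that of `G'`. -/
def castV : Fin 6 → Fin 8 := fun a => ⟨a.val, by omega⟩

/-- The hyperedge set of the 4-uniform hypergraph `G'`, on vertex set `Fin 8`:
the two centres are `6` and `7`, and each edge `ab` of `G` gives rise to the
hyperedge `{a, b, 6, 7}`. -/
def Ehyp : Set (Finset (Fin 8)) :=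
  {s | ∃ a b : Fin 6, G.Adj a b ∧ s = {castV a, castV b, 6, 7}}

/-- Every copy of the 4-uniform hypergraph `G'` (the image of its hyperedge set
under an injection `h`) is contained in exactly one board `K^{X,Y}`: there is a
unique pair of vertices contained in all hyperedges of the copy. -/
theorem stmt9 {V : Type*} [DecidableEq V] (h : Fin 8 → V)
    (hinj : Function.Injective h) :
    ∃! p : Finset V, p.card = 2 ∧ ∀ s ∈ Ehyp, p ⊆ s.image h := by
  refine ⟨{h 6, h 7}, ⟨?_, ?_⟩, ?_⟩
  · rw [Finset.card_insert_of_notMem (by simp [hinj.eq_iff]), Finset.card_singleton]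
  · rintro s ⟨a, b, hab, rfl⟩ x hx
    simp only [Finset.mem_insert, Finset.mem_singleton] at hx
    simp only [Finset.mem_image]
    rcases hx with rfl | rfl
    · exact ⟨6, by simp, rfl⟩
    · exact ⟨7, by simp, rfl⟩
  · rintro p ⟨hc, hp⟩
    have h1 := hp {castV 0, castV 2, 6, 7} ⟨0, 2, by decide, rfl⟩
    have h2 := hp {castV 1, castV 3, 6, 7} ⟨1, 3, by decide, rfl⟩
    have hsub : p ⊆ {h 6, h 7} := by
      intro x hx
      obtain ⟨i, hi, rfl⟩ := Finset.mem_image.mp (h1 hx)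
      obtain ⟨j, hj, hji⟩ := Finset.mem_image.mp (h2 hx)
      have hij : j = i := hinj hji
      subst hij
      have h67 : j = 6 ∨ j = 7 := by clear hx hji; revert hi hj; revert j; decide
      rcases h67 with rfl | rfl <;> simp
    refine Finset.eq_of_subset_of_card_le hsub ?_
    rw [hc, Finset.card_insert_of_notMem (by simp [hinj.eq_iff]), Finset.card_singleton]
end

section
/- If a two-colouring (by players P1 and P2) of the edges of the complete graph on ω contains, for P1, only a finite edge set E₀ ∪ E₂ with |E₀ ∪ E₂| ≤ 8 together with a star S = {A₀Fᵢ} (with all Fᵢ distinct, each Fᵢ of P1-degree at most 4, and A₀ on at most 3 P1-triangles), and every copy of G within E₀ ∪ E₂ has at most 8 P1-edges while |E(G)| = 9, then P1's edges contain no copy of G. -/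
/-- If the first player's edge set `P` consists of a finite edge set `E₀ ∪ E₂` of
size at most 8 together with a star `{s(A₀, Fv i)}` vertex-disjoint from
`E₀ ∪ E₂` except at `A₀`, each leaf `Fv i` has P1-degree at most 4, `A₀` lies on
at most 3 P1-triangles, and no copy of `G` lies entirely within `E₀ ∪ E₂`
(every copy has at most 8 of its 9 edges there), then `P` contains no copy
of `G`. -/
theorem stmt17 {V : Type*} [DecidableEq V] (A₀ : V) {k : ℕ}
    (Fv : Fin k → V) (hFinj : Function.Injective Fv) (hFA : ∀ i, Fv i ≠ A₀)
    (E₀₂ : Finset (Sym2 V)) (hcard : E₀₂.card ≤ 8)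
    (hdisjoint : ∀ e ∈ E₀₂, ∀ i, Fv i ∉ e)
    (P : Set (Sym2 V))
    (hP : P = ↑E₀₂ ∪ {e : Sym2 V | ∃ i, e = s(A₀, Fv i)})
    (hdegF : ∀ i, ({e ∈ P | Fv i ∈ e}).ncard ≤ 4)
    (htriA : ({e : Sym2 V | ∃ t₁ t₂ : V, e = s(t₁, t₂) ∧
        s(A₀, t₁) ∈ P ∧ s(A₀, t₂) ∈ P ∧ s(t₁, t₂) ∈ P}).ncard ≤ 3)
    (hcopies : ∀ f : Fin 6 ↪ V,
      ¬ ∀ a b, G.Adj a b → s(f a, f b) ∈ (E₀₂ : Set (Sym2 V))) :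
    ¬ ∃ f : Fin 6 ↪ V, ∀ a b, G.Adj a b → s(f a, f b) ∈ P := by

  rintro ⟨f, hf⟩
  -- any neighbour (via the copy) of a star leaf must be A₀
  have star_only : ∀ (i : Fin k) (x y : Fin 6), f x = Fv i → G.Adj x y → f y = A₀ := by
    intro i x y hfx hadj
    have hmem : s(f x, f y) ∈ P := hf x y hadj
    rw [hP] at hmem
    rcases hmem with h | ⟨j, hj⟩
    · exact absurd (by rw [hfx] at *; exact Sym2.mem_mk_left _ _) (hdisjoint _ h i)
    · rw [Sym2.eq_iff] at hj
      rcases hj with ⟨h1, h2⟩ | ⟨h1, h2⟩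
      · exact absurd (hfx ▸ h1) (hFA i)
      · exact h2
  -- every vertex of G has two distinct neighbours
  have hex : ∀ x : Fin 6, ∃ y z : Fin 6, y ≠ z ∧ G.Adj x y ∧ G.Adj x z := by decide
  -- hence no vertex of the copy is a leaf
  have final : ∀ (x : Fin 6) (i : Fin k), f x ≠ Fv i := by
    intro x i hx
    obtain ⟨y, z, hyz, hy, hz⟩ := hex x
    have h1 := star_only i x y hx hy
    have h2 := star_only i x z hx hz
    exact hyz (f.injective (h1.trans h2.symm))
  -- but some edge of the copy is a star edge
  have h02 : G.Adj 0 2 := by decide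
  have := hcopies f
  push_neg at this
  obtain ⟨a, b, hab, hnot⟩ := this
  have hp := hf a b hab
  rw [hP] at hp
  rcases hp with h | ⟨i, hi⟩
  · exact hnot h
  · rw [Sym2.eq_iff] at hi
    rcases hi with ⟨h1, h2⟩ | ⟨h1, h2⟩
    · exact final b i h2
    · exact final a i h1
end
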